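/- Let R be a ring of Nevanlinna–Smirnov type (H^∞ ⊆ R ⊆ N, and every f ∈ R equals g/h with g, h ∈ H^∞, h invertible in R). If J₁ and J₂ are ideals of R with J₁ ∩ H^∞ = J₂ ∩ H^∞, then J₁ = J₂. -/

import Mathlib

noncomputable def logPlus (x : ℝ) : ℝ := max (Real.log x) 0

/-- Membership criterion for the algebra `H^∞` of bounded holomorphic functions on the disk. -/
def IsHinf (f : ℂ → ℂ) : Prop :=
  DifferentiableOn ℂ f (Metric.ball 0 1) ∧
    ∃ M : ℝ, ∀ z ∈ Metric.ball (0 : ℂ) 1, ‖f z‖ ≤ M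

/-- Membership criterion for the Nevanlinna class `N`. -/
def IsNevanlinna (f : ℂ → ℂ) : Prop :=
  DifferentiableOn ℂ f (Metric.ball 0 1) ∧
    ∃ M : ℝ, ∀ r ∈ Set.Ioo (0 : ℝ) 1,
      (∫ θ in (0 : ℝ)..(2 * Real.pi),
        logPlus ‖f (r * Complex.exp (θ * Complex.I))‖) / (2 * Real.pi) ≤ M

theorem Ideal.map_comap_eq_self_of_forall_exists_unit_mul {A B : Type*} [Semiring A]
    [Semiring B] (φ : A →+* B) (hφ : ∀ b, ∃ a, ∃ u : Bˣ, φ a = u * b) (J : Ideal B) :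
    (J.comap φ).map φ = J := by
  refine le_antisymm Ideal.map_comap_le fun b hb => ?_
  obtain ⟨a, u, hab⟩ := hφ b
  have ha : a ∈ J.comap φ := by
    rw [Ideal.mem_comap, hab]
    exact J.mul_mem_left _ hb
  rw [← u.inv_mul_cancel_left b, ← hab]
  exact Ideal.mul_mem_left _ _ (Ideal.mem_map_of_mem φ ha)

theorem ideal_eq_of_trace_eq_general (R Hinf : Subring (ℂ → ℂ))
    (hHR : Hinf ≤ R)
    (hNS : ∀ f : R, ∃ g h : Hinf, ∃ hhR : (h : ℂ → ℂ) ∈ R,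
      IsUnit (⟨(h : ℂ → ℂ), hhR⟩ : R) ∧ (h : ℂ → ℂ) * (f : ℂ → ℂ) = g)
    (J₁ J₂ : Ideal R)
    (htrace : Ideal.comap (Subring.inclusion hHR) J₁ =
      Ideal.comap (Subring.inclusion hHR) J₂) :
    J₁ = J₂ := by
  have hunit : ∀ f : R, ∃ g : Hinf, ∃ u : Rˣ, Subring.inclusion hHR g = u * f := fun f => by
    obtain ⟨g, h, hhR, hu, hhf⟩ := hNS f
    exact ⟨g, hu.unit, Subtype.ext hhf.symm⟩
  rw [← Ideal.map_comap_eq_self_of_forall_exists_unit_mul _ hunit J₁, htrace,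
    Ideal.map_comap_eq_self_of_forall_exists_unit_mul _ hunit J₂]

/-- An ideal of a ring of Nevanlinna–Smirnov type is determined by its trace in `H^∞`. -/
theorem ideal_eq_of_trace_eq (R Hinf : Subring (ℂ → ℂ))
    (hHinf : ∀ f, f ∈ Hinf ↔ IsHinf f) (hHR : Hinf ≤ R)
    (hRN : ∀ f ∈ R, IsNevanlinna f)
    (hNS : ∀ f : R, ∃ g h : Hinf, ∃ hhR : (h : ℂ → ℂ) ∈ R,
      IsUnit (⟨(h : ℂ → ℂ), hhR⟩ : R) ∧ (h : ℂ → ℂ) * (f : ℂ → ℂ) = g)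
    (J₁ J₂ : Ideal R)
    (htrace : Ideal.comap (Subring.inclusion hHR) J₁ =
      Ideal.comap (Subring.inclusion hHR) J₂) :
    J₁ = J₂ :=
  ideal_eq_of_trace_eq_general R Hinf hHR hNS J₁ J₂ htrace
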